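/- Let K be a field of characteristic 0 with a valuation v_K : K → 𝕋, I a differential ideal of K[[t]]{x₁,…,xₙ} with f₁,…,f_s as above, and S ∈ 𝕋[[t]]ⁿ. Then S ∈ trop_ṽ(Sol_{K[[t]]}(I)) if and only if the set (A_∞)_S^{v_K} is nonempty; i.e. S is the coefficientwise tropicalization of a power series solution of I if and only if A_∞ meets the fiber (𝕍_∞)_S^{v_K}. -/

import Mathlib

open scoped Classical ENNReal
open Filter
set_option synthInstance.maxHeartbeats 1000000
set_option maxHeartbeats 1000000

noncomputable section
namespace TropDiff

/-- The tropical semiring 𝕋 = ℝ ∪ {∞} with addition min and multiplication +,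
modelled as `WithTop ℝ` (so that the tropical sum is `min` and the tropical
product is `+`). -/
abbrev TT : Type := WithTop ℝ

/-- Tropical power series 𝕋[[t]], modelled by their coefficient functions. -/
abbrev TSeries : Type := ℕ → TT

/-- 𝕋₂ = ℝ² ∪ {∞}, with addition the lexicographic minimum (i.e. the lattice
`min` of `WithTop (ℝ ×ₗ ℝ)`) and multiplication the componentwise sum `+`. -/
abbrev T2 : Type := WithTop (ℝ ×ₗ ℝ)

/-- `vK : K → 𝕋` is a valuation: v(a) = ∞ iff a = 0, v(ab) = v(a)+v(b) and
v(a+b) ≥ min (v(a), v(b)). -/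
structure IsVal (K : Type) [Field K] (vK : K → TT) : Prop where
  eq_top_iff : ∀ a : K, vK a = ⊤ ↔ a = 0
  map_mul : ∀ a b : K, vK (a * b) = vK a + vK b
  min_le_add : ∀ a b : K, min (vK a) (vK b) ≤ vK (a + b)

variable {K : Type} [Field K]

/-- Ritt's differential polynomial ring K[[t]]{x₁,…,xₙ}: the polynomial ring
over K[[t]] in the variables x_i^{(j)}, i ∈ Fin n, j ∈ ℕ. -/
abbrev DP (K : Type) [Field K] (n : ℕ) : Type := MvPolynomial (Fin n × ℕ) (PowerSeries K)

/-- d/dt on K[[t]]. -/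
def psDeriv (g : PowerSeries K) : PowerSeries K :=
  PowerSeries.mk fun j => ((j + 1 : ℕ) : K) * PowerSeries.coeff (j + 1) g

/-- The Ritt differential on K[[t]]{x₁,…,xₙ}: the unique derivation extending
d/dt on the coefficients and sending x_i^{(j)} to x_i^{(j+1)} (written out on
each monomial by the Leibniz rule). -/
def dDP {n : ℕ} (p : DP K n) : DP K n :=
  p.support.sum (fun m => MvPolynomial.monomial m (psDeriv (MvPolynomial.coeff m p))) +
  p.support.sum (fun m => MvPolynomial.C (MvPolynomial.coeff m p) *
    m.support.sum (fun ij => m ij •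
      (MvPolynomial.X (ij.1, ij.2 + 1) * MvPolynomial.monomial (m - Finsupp.single ij 1) 1)))

/-- Evaluation of a differential polynomial at an n-tuple of power series:
substitute (d/dt)ʲ(a i) for x_i^{(j)}.  `a` is a solution of `f` iff this is 0. -/
def evalSol {n : ℕ} (f : DP K n) (a : Fin n → PowerSeries K) : PowerSeries K :=
  MvPolynomial.eval (fun ij => psDeriv^[ij.2] (a ij.1)) f

/-- Coefficientwise tropicalization ṽ : K[[t]] → 𝕋[[t]]. -/
def tropS (vK : K → TT) (g : PowerSeries K) : TSeries := fun j => vK (PowerSeries.coeff j g)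

/-- The tropical differential d_v on 𝕋[[t]]:
d_v(∑ cₙtⁿ) = ∑ (v_K((n+1)·1_K) + c_{n+1}) tⁿ. -/
def dv (vK : K → TT) (S : TSeries) : TSeries := fun j => vK ((j + 1 : ℕ) : K) + S (j + 1)

/-- Φ : 𝕋[[t]] → 𝕋₂, S ↦ (n₀, c_{n₀}) where n₀ is the least index with
c_{n₀} ≠ ∞; the all-∞ series goes to ∞. -/
def Phi (S : TSeries) : T2 :=
  if h : ∃ j, S j ≠ ⊤ then
    ((toLex ((Nat.find h : ℝ), WithTop.untopD 0 (S (Nat.find h))) : ℝ ×ₗ ℝ) : T2)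
  else ⊤

/-- The rank-2 valuation v : K[[t]] → 𝕋₂, v(∑ aₙ tⁿ) = (n₀, v_K(a_{n₀})) where
n₀ is the least index with a_{n₀} ≠ 0, and v(0) = ∞. -/
def valT2 (vK : K → TT) (g : PowerSeries K) : T2 :=
  if h : ∃ j, PowerSeries.coeff j g ≠ 0 then
    ((toLex ((Nat.find h : ℝ),
        WithTop.untopD 0 (vK (PowerSeries.coeff (Nat.find h) g))) : ℝ ×ₗ ℝ) : T2)
  else ⊤

/-- The tropical weight ∑_{i,j} λ_{i,j}·Φ(d_vʲ(S_i)) of the differential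
monomial with exponents λ = m. -/
def mweight {n : ℕ} (vK : K → TT) (S : Fin n → TSeries) (m : (Fin n × ℕ) →₀ ℕ) : T2 :=
  m.support.sum fun ij => m ij • Phi ((dv vK)^[ij.2] (S ij.1))

/-- trop_v(f)(S): the lexicographic minimum, over the monomials λ of f, of
v(A_λ) + ∑_{i,j} λ_{i,j}·Φ(d_vʲ(S_i)). -/
def tropEval {n : ℕ} (vK : K → TT) (f : DP K n) (S : Fin n → TSeries) : T2 :=
  f.support.inf fun m => valT2 vK (MvPolynomial.coeff m f) + mweight vK S m

/-- S is a tropical solution of trop_v(f): the minimum is ∞ or is attained by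
at least two distinct monomials of f. -/
def IsTropSol {n : ℕ} (vK : K → TT) (f : DP K n) (S : Fin n → TSeries) : Prop :=
  tropEval vK f S = ⊤ ∨
  ∃ m₁ ∈ f.support, ∃ m₂ ∈ f.support, m₁ ≠ m₂ ∧
    valT2 vK (MvPolynomial.coeff m₁ f) + mweight vK S m₁ = tropEval vK f S ∧
    valT2 vK (MvPolynomial.coeff m₂ f) + mweight vK S m₂ = tropEval vK f S

/-- F_{l,r} = (dʳ f_l)|_{t=0} ∈ K[x_i^{(j)}]. -/
def Flr {n s : ℕ} (fs : Fin s → DP K n) (l : Fin s) (r : ℕ) :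
    MvPolynomial (Fin n × ℕ) K :=
  MvPolynomial.map ((PowerSeries.constantCoeff : PowerSeries K →+* K)) (dDP^[r] (fs l))

/-- A_∞ ⊆ (K^ℕ)ⁿ: the common zero locus of all the F_{l,r}. -/
def Ainf {n s : ℕ} (fs : Fin s → DP K n) : Set (Fin n → ℕ → K) :=
  {x | ∀ (l : Fin s) (r : ℕ), MvPolynomial.eval (fun ij => x ij.1 ij.2) (Flr fs l r) = 0}

/-- N_m: the least N such that every F_{l,r} with r ≤ m involves only the
variables x_i^{(j)} with j ≤ N (i.e. the largest j occurring). -/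
def Nm {n s : ℕ} (fs : Fin s → DP K n) (m : ℕ) : ℕ :=
  Finset.sup (Finset.univ ×ˢ Finset.range (m + 1)) fun lr =>
    (Flr fs lr.1 lr.2).support.sup fun mon => mon.support.sup fun ij => ij.2

/-- A_m ⊆ (K^{N_m+1})ⁿ: the common zero locus of the F_{l,r} with r ≤ m, the
coordinate (i,j) being substituted for x_i^{(j)}. -/
def Am {n s : ℕ} (fs : Fin s → DP K n) (m : ℕ) : Set (Fin n → Fin (Nm fs m + 1) → K) :=
  {x | ∀ (l : Fin s), ∀ r ≤ m, MvPolynomial.eval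
    (fun ij => if h : ij.2 < Nm fs m + 1 then x ij.1 ⟨ij.2, h⟩ else 0) (Flr fs l r) = 0}

/-- The projection π_{(m,m′)} forgetting the coordinates (i,j) with j > N'. -/
def projN {n N N' : ℕ} (h : N' ≤ N) (x : Fin n → Fin (N + 1) → K) :
    Fin n → Fin (N' + 1) → K :=
  fun i j => x i (Fin.castLE (Nat.succ_le_succ h) j)

/-- The fiber (𝕍_m)_S^{v_K} of the tropicalization with respect to v_K:
v_K(x_{i,j}) = c_{i,j} + v_K(j!). -/
def VmVal {n : ℕ} (vK : K → TT) (S : Fin n → TSeries) (N : ℕ) :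
    Set (Fin n → Fin (N + 1) → K) :=
  {x | ∀ (i : Fin n) (j : Fin (N + 1)),
    vK (x i j) = S i (j : ℕ) + vK ((Nat.factorial (j : ℕ) : ℕ) : K)}

/-- The fiber (𝕍_m)_S^{v_triv} of the tropicalization with respect to the
trivial valuation: x_{i,j} = 0 iff c_{i,j} = ∞. -/
def VmTriv {n : ℕ} (S : Fin n → TSeries) (N : ℕ) : Set (Fin n → Fin (N + 1) → K) :=
  {x | ∀ (i : Fin n) (j : Fin (N + 1)), x i j = 0 ↔ S i (j : ℕ) = ⊤}

/-- The fiber (𝕍_∞)_S^{v_K}. -/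
def VinfVal {n : ℕ} (vK : K → TT) (S : Fin n → TSeries) : Set (Fin n → ℕ → K) :=
  {x | ∀ (i : Fin n) (j : ℕ), vK (x i j) = S i j + vK ((Nat.factorial j : ℕ) : K)}

/-- Zariski closed subsets of affine space (K^N)ⁿ: zero loci of collections of
polynomials. -/
def ZClosed {n N : ℕ} (C : Set (Fin n → Fin N → K)) : Prop :=
  ∃ T : Set (MvPolynomial (Fin n × Fin N) K),
    C = {x | ∀ p ∈ T, MvPolynomial.eval (fun ij => x ij.1 ij.2) p = 0}

/-- Zariski constructible subsets: finite unions of differences of Zariski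
closed sets. -/
def ZConstructible {n N : ℕ} (C : Set (Fin n → Fin N → K)) : Prop :=
  ∃ (k : ℕ) (Z W : Fin k → Set (Fin n → Fin N → K)),
    (∀ i, ZClosed (Z i)) ∧ (∀ i, ZClosed (W i)) ∧ C = ⋃ i, Z i \ W i

/-! ### Auxiliary lemmas -/

section Aux

variable {K : Type} [Field K]

lemma psDeriv_eq : (psDeriv : PowerSeries K → PowerSeries K) = ⇑(PowerSeries.derivative K) := by
  funext g
  ext j
  simp only [psDeriv, PowerSeries.coeff_mk, PowerSeries.coeff_derivative]
  push_cast
  ring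

lemma coeff_psDeriv (g : PowerSeries K) (j : ℕ) :
    PowerSeries.coeff j (psDeriv g) = ((j + 1 : ℕ) : K) * PowerSeries.coeff (j + 1) g := by
  simp [psDeriv]

lemma constCoeff_psDeriv_iterate (r : ℕ) (g : PowerSeries K) :
    PowerSeries.constantCoeff (psDeriv^[r] g) =
      ((r.factorial : ℕ) : K) * PowerSeries.coeff r g := by
  induction r generalizing g with
  | zero => simp [PowerSeries.coeff_zero_eq_constantCoeff]
  | succ r ih =>
      rw [Function.iterate_succ_apply, ih, coeff_psDeriv, Nat.factorial_succ]
      push_cast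
      ring

lemma eq_zero_of_constCoeff_iterate [CharZero K] (g : PowerSeries K)
    (h : ∀ r, PowerSeries.constantCoeff (psDeriv^[r] g) = 0) : g = 0 := by
  ext r
  have hr := h r
  rw [constCoeff_psDeriv_iterate] at hr
  have hfac : ((r.factorial : ℕ) : K) ≠ 0 := Nat.cast_ne_zero.mpr r.factorial_ne_zero
  simpa [hfac] using hr

lemma psDeriv_zero : psDeriv (0 : PowerSeries K) = 0 := by
  rw [psDeriv_eq]; exact map_zero _

lemma psDeriv_iterate_zero (r : ℕ) : psDeriv^[r] (0 : PowerSeries K) = 0 :=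
  Function.iterate_fixed psDeriv_zero r

/-- Derivative of a finite product. -/
lemma deriv_finset_prod {ι : Type} [DecidableEq ι] (s : Finset ι) (h : ι → PowerSeries K) :
    PowerSeries.derivative K (∏ x ∈ s, h x) =
      ∑ x ∈ s, PowerSeries.derivative K (h x) * ∏ y ∈ s.erase x, h y := by
  induction s using Finset.induction_on with
  | empty => simp
  | @insert a s' hade ih =>
      rw [Finset.prod_insert hade, Derivation.leibniz, Finset.sum_insert hade,
        Finset.erase_insert hade, smul_eq_mul, smul_eq_mul, ih, Finset.mul_sum]
      rw [add_comm]
      congr 1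
      · exact mul_comm _ _
      · apply Finset.sum_congr rfl
        intro x hx
        have hax : a ≠ x := fun hax => hade (hax ▸ hx)
        rw [Finset.erase_insert_of_ne hax,
          Finset.prod_insert (fun hmem => hade (Finset.mem_of_mem_erase hmem))]
        ring

lemma support_tsub_subset {ι : Type} (m m' : ι →₀ ℕ) :
    (m - m').support ⊆ m.support := by
  intro y hy
  rw [Finsupp.mem_support_iff] at hy ⊢
  intro h0
  apply hy
  rw [Finsupp.tsub_apply, h0]
  simp

lemma prod_pow_tsub_single {n : ℕ} (g : Fin n × ℕ → PowerSeries K)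
    (m : (Fin n × ℕ) →₀ ℕ) {x : Fin n × ℕ} (hx : x ∈ m.support) :
    (∏ y ∈ (m - Finsupp.single x 1).support, g y ^ ((m - Finsupp.single x 1 : (Fin n × ℕ) →₀ ℕ) y)) =
      g x ^ (m x - 1) * ∏ y ∈ m.support.erase x, g y ^ m y := by
  have hsub : (m - Finsupp.single x 1).support ⊆ m.support := support_tsub_subset _ _
  rw [Finset.prod_subset hsub (by
    intro y _ hy
    rw [Finsupp.notMem_support_iff] at hy
    rw [hy, pow_zero])]
  rw [← Finset.mul_prod_erase m.support _ hx]
  congr 1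
  · rw [Finsupp.tsub_apply, Finsupp.single_eq_same]
  · apply Finset.prod_congr rfl
    intro y hy
    have hyx : y ≠ x := Finset.ne_of_mem_erase hy
    rw [Finsupp.tsub_apply, Finsupp.single_eq_of_ne' (Ne.symm hyx), Nat.sub_zero]

/-- Derivative of an evaluated monomial (the multivariate Leibniz rule). -/
lemma deriv_prod_pow {n : ℕ} (g : Fin n × ℕ → PowerSeries K) (m : (Fin n × ℕ) →₀ ℕ) :
    PowerSeries.derivative K (∏ ij ∈ m.support, g ij ^ m ij) =
      ∑ ij ∈ m.support, m ij •
        (PowerSeries.derivative K (g ij) *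
          ∏ y ∈ (m - Finsupp.single ij 1).support, g y ^ ((m - Finsupp.single ij 1 : (Fin n × ℕ) →₀ ℕ) y)) := by
  rw [deriv_finset_prod]
  apply Finset.sum_congr rfl
  intro x hx
  rw [prod_pow_tsub_single g m hx, Derivation.leibniz_pow, smul_eq_mul, smul_mul_assoc]
  congr 1
  ring

/-- The chain rule: evaluation intertwines the Ritt differential and d/dt. -/
lemma evalSol_dDP {n : ℕ} (p : DP K n) (a : Fin n → PowerSeries K) :
    evalSol (dDP p) a = psDeriv (evalSol p a) := by
  set g : Fin n × ℕ → PowerSeries K := fun ij => psDeriv^[ij.2] (a ij.1) with hg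
  have hg' : ∀ ij : Fin n × ℕ, psDeriv (g ij) = g (ij.1, ij.2 + 1) := by
    intro ij
    simp only [hg]
    exact (Function.iterate_succ_apply' psDeriv ij.2 (a ij.1)).symm
  show MvPolynomial.eval g (dDP p) = psDeriv (MvPolynomial.eval g p)
  rw [psDeriv_eq]
  conv_rhs => rw [MvPolynomial.eval_eq]
  rw [map_sum]
  unfold dDP
  rw [map_add, map_sum, map_sum, ← Finset.sum_add_distrib]
  apply Finset.sum_congr rfl
  intro m _
  rw [Derivation.leibniz, smul_eq_mul, smul_eq_mul, deriv_prod_pow]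
  rw [MvPolynomial.eval_monomial, map_mul, MvPolynomial.eval_C, map_sum, Finset.mul_sum,
    Finset.mul_sum]
  have h1 : (Finsupp.prod m fun n e => g n ^ e) = ∏ ij ∈ m.support, g ij ^ m ij := rfl
  rw [h1]
  rw [add_comm]
  congr 1
  · apply Finset.sum_congr rfl
    intro ij _
    rw [map_nsmul, map_mul, MvPolynomial.eval_X, MvPolynomial.eval_monomial, one_mul,
      ← psDeriv_eq, hg' ij]
    rfl
  · rw [psDeriv_eq]
    ring

lemma evalSol_dDP_iterate {n : ℕ} (r : ℕ) (p : DP K n) (a : Fin n → PowerSeries K) :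
    evalSol (dDP^[r] p) a = psDeriv^[r] (evalSol p a) := by
  induction r generalizing p with
  | zero => rfl
  | succ r ih =>
      rw [Function.iterate_succ_apply, ih, evalSol_dDP,
        ← Function.iterate_succ_apply, Function.iterate_succ_apply']

lemma constCoeff_eval {n : ℕ} (g : Fin n × ℕ → PowerSeries K) (q : DP K n) :
    PowerSeries.constantCoeff (MvPolynomial.eval g q) =
      MvPolynomial.eval₂ (PowerSeries.constantCoeff : PowerSeries K →+* K)
        (fun ij => PowerSeries.constantCoeff (g ij)) q := by
  have h : MvPolynomial.eval g q = MvPolynomial.eval₂ (RingHom.id _) g q := rfl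
  rw [h, MvPolynomial.eval₂_comp_left (PowerSeries.constantCoeff : PowerSeries K →+* K)]
  rfl

lemma eval_Flr {n s : ℕ} (fs : Fin s → DP K n) (a : Fin n → PowerSeries K) (l : Fin s) (r : ℕ) :
    MvPolynomial.eval
        (fun ij : Fin n × ℕ => PowerSeries.constantCoeff (psDeriv^[ij.2] (a ij.1)))
        (Flr fs l r) =
      PowerSeries.constantCoeff (psDeriv^[r] (evalSol (fs l) a)) := by
  rw [Flr, MvPolynomial.eval_map, ← evalSol_dDP_iterate]
  rw [show evalSol (dDP^[r] (fs l)) a =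
    MvPolynomial.eval (fun ij : Fin n × ℕ => psDeriv^[ij.2] (a ij.1)) (dDP^[r] (fs l)) from rfl]
  rw [constCoeff_eval]

lemma IsVal.one_eq_zero {vK : K → TT} (hv : IsVal K vK) : vK 1 = 0 := by
  have h := hv.map_mul 1 1
  rw [one_mul] at h
  have hne : vK 1 ≠ ⊤ := fun h' => one_ne_zero ((hv.eq_top_iff 1).mp h')
  lift vK 1 to ℝ using hne with r hr
  rw [← WithTop.coe_add, WithTop.coe_inj] at h
  rw [show r = 0 by linarith]
  rfl

lemma dDP_iterate_mem {n : ℕ} {I : Ideal (DP K n)} (hdiff : ∀ f ∈ I, dDP f ∈ I)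
    {f : DP K n} (hf : f ∈ I) (r : ℕ) : dDP^[r] f ∈ I := by
  induction r with
  | zero => exact hf
  | succ r ih => rw [Function.iterate_succ_apply']; exact hdiff _ ih

end Aux

/-- S is the coefficientwise tropicalization of a power series solution of I
if and only if A_∞ meets the fiber (𝕍_∞)_S^{v_K}. -/
theorem trop_of_solution_iff_fiber_nonempty
    {K : Type} [Field K] [CharZero K]
    (vK : K → TT) (hv : IsVal K vK)
    {n : ℕ} (I : Ideal (DP K n)) (hdiff : ∀ f ∈ I, dDP f ∈ I)
    {s : ℕ} (fs : Fin s → DP K n) (hmem : ∀ l, fs l ∈ I)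
    (hsol : ∀ a : Fin n → PowerSeries K,
      (∀ f ∈ I, evalSol f a = 0) ↔ (∀ l, evalSol (fs l) a = 0))
    (S : Fin n → TSeries) :
    (∃ a : Fin n → PowerSeries K,
        (∀ f ∈ I, evalSol f a = 0) ∧ (∀ i, tropS vK (a i) = S i)) ↔
      (Ainf fs ∩ VinfVal vK S).Nonempty := by
  constructor
  · rintro ⟨a, ha, hS⟩
    refine ⟨fun i j => PowerSeries.constantCoeff (psDeriv^[j] (a i)), ?_, ?_⟩
    · intro l r
      have h := eval_Flr fs a l r
      have hz : evalSol (fs l) a = 0 := ha _ (hmem l)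
      rw [hz, psDeriv_iterate_zero, map_zero] at h
      exact h
    · intro i j
      show vK (PowerSeries.constantCoeff (psDeriv^[j] (a i))) =
        S i j + vK ((Nat.factorial j : ℕ) : K)
      rw [constCoeff_psDeriv_iterate, hv.map_mul]
      have : vK (PowerSeries.coeff j (a i)) = S i j := by
        rw [← hS i]; rfl
      rw [this, add_comm]
  · rintro ⟨x, hxA, hxV⟩
    set a : Fin n → PowerSeries K :=
      fun i => PowerSeries.mk fun j => ((j.factorial : ℕ) : K)⁻¹ * x i j with ha
    have hfac : ∀ j : ℕ, ((j.factorial : ℕ) : K) ≠ 0 :=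
      fun j => Nat.cast_ne_zero.mpr j.factorial_ne_zero
    have hcc : ∀ (i : Fin n) (j : ℕ),
        PowerSeries.constantCoeff (psDeriv^[j] (a i)) = x i j := by
      intro i j
      rw [constCoeff_psDeriv_iterate, ha]
      simp only [PowerSeries.coeff_mk]
      rw [← mul_assoc, mul_inv_cancel₀ (hfac j), one_mul]
    have hsfs : ∀ l, evalSol (fs l) a = 0 := by
      intro l
      apply eq_zero_of_constCoeff_iterate
      intro r
      have h := eval_Flr fs a l r
      have hfun : (fun ij : Fin n × ℕ => PowerSeries.constantCoeff (psDeriv^[ij.2] (a ij.1)))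
          = fun ij : Fin n × ℕ => x ij.1 ij.2 := by
        funext ij; exact hcc ij.1 ij.2
      rw [hfun] at h
      rw [← h]
      exact hxA l r
    refine ⟨a, fun f hf => (hsol a).mpr hsfs f hf, ?_⟩
    intro i
    funext j
    show vK (PowerSeries.coeff j (a i)) = S i j
    rw [ha]
    simp only [PowerSeries.coeff_mk]
    rw [hv.map_mul, hxV i j]
    have h1 : vK (((j.factorial : ℕ) : K)⁻¹) + vK ((j.factorial : ℕ) : K) = 0 := by
      rw [← hv.map_mul, inv_mul_cancel₀ (hfac j), hv.one_eq_zero]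
    calc vK (((j.factorial : ℕ) : K)⁻¹) + (S i j + vK ((j.factorial : ℕ) : K))
        = S i j + (vK (((j.factorial : ℕ) : K)⁻¹) + vK ((j.factorial : ℕ) : K)) := by
          abel
      _ = S i j := by rw [h1, add_zero]

end TropDiff
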